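/- For all z ∈ ℂ with 0 < |z| < 1, the function f(z) = 1/(z · log(e/|z|)) satisfies ∂f/∂z̄ = 1 / (2 |z|² log²(e/|z|)), where ∂/∂z̄ = (1/2)(∂/∂x + i ∂/∂y). Consequently, the ℂ²-valued form α(z) = f(z)·(1, −i) dz satisfies ∂̄α = −ω^{z̄} ∧ α on the punctured unit disc, where ω^{z̄} = (i/2)/(z̄ log(e/|z|)) · [[0, −1],[1, 0]] dz̄. -/

import Mathlib

/-!
`∂̄` is a derivation on real-differentiable functions that kills `z ↦ z`, and `∂̄ |z|² = z`.
Hence `∂̄ log(e/|z|) = -z / (2|z|²)`, and the quotient rule gives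
`∂̄ f = z² / (2|z|² · z² log²(e/|z|)) = 1 / (2|z|² log²(e/|z|))`.
For `α`, the vector `(1, -i)` is an eigenvector of the rotation `[[0,-1],[1,0]]` with eigenvalue
`i`, so `-ω^{z̄}(f (1, -i)) = -(i/2) · i · (1, -i) / (|z|² log²(e/|z|)) = ∂̄f · (1, -i)`.
-/

open Complex

noncomputable section

/-- `log(e/|z|) = 1 − log|z|`. -/
def Lg (z : ℂ) : ℝ := 1 - Real.log (‖z‖)

/-- The function `f(z) = 1/(z log(e/|z|))`. -/
def fEx (z : ℂ) : ℂ := (z * (Lg z : ℝ))⁻¹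

/-- The coefficient matrix of `ω^{z̄} = (i/2)/(z̄ log(e/|z|)) [[0,-1],[1,0]] dz̄`. -/
def Wcoef (z : ℂ) : Matrix (Fin 2) (Fin 2) ℂ :=
  ((Complex.I / 2) / ((starRingEnd ℂ) z * (Lg z : ℝ))) • !![0, -1; 1, 0]

namespace Complex

def dbar (f : ℂ → ℂ) (z : ℂ) : ℂ :=
  (1/2 : ℂ) * (fderiv ℝ f z 1 + I * fderiv ℝ f z I)

variable {f g : ℂ → ℂ} {z : ℂ}

theorem dbar_id : dbar (fun w => w) z = 0 := by
  simp [dbar, fderiv_fun_id]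

theorem dbar_mul (hf : DifferentiableAt ℝ f z) (hg : DifferentiableAt ℝ g z) :
    dbar (fun w => f w * g w) z = f z * dbar g z + g z * dbar f z := by
  simp only [dbar, fderiv_fun_mul hf hg, add_apply, smul_apply, smul_eq_mul]
  ring

theorem hasFDerivAt_inv_comp (hf : DifferentiableAt ℝ f z) (h : f z ≠ 0) :
    HasFDerivAt (fun w => (f w)⁻¹) (-(f z ^ 2)⁻¹ • fderiv ℝ f z) z :=
  (hasDerivAt_inv h).comp_hasFDerivAt z hf.hasFDerivAt

theorem dbar_inv (hf : DifferentiableAt ℝ f z) (h : f z ≠ 0) :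
    dbar (fun w => (f w)⁻¹) z = -dbar f z / f z ^ 2 := by
  simp only [dbar, (hasFDerivAt_inv_comp hf h).fderiv, smul_apply, smul_eq_mul]
  field_simp
  ring

theorem dbar_ofReal {u : ℂ → ℝ} {u' : ℂ →L[ℝ] ℝ} (hu : HasFDerivAt u u' z) :
    dbar (fun w => (u w : ℂ)) z = (1/2 : ℂ) * (u' 1 + I * u' I) := by
  have h : HasFDerivAt (fun w => (u w : ℂ)) (ofRealCLM.comp u') z :=
    ofRealCLM.hasFDerivAt.comp z hu
  simp [dbar, h.fderiv]

theorem dbar_ofReal_comp {u : ℂ → ℝ} {φ : ℝ → ℝ} {φ' : ℝ} (hφ : HasDerivAt φ φ' (u z))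
    (hu : DifferentiableAt ℝ u z) :
    dbar (fun w => (φ (u w) : ℂ)) z = φ' * dbar (fun w => (u w : ℂ)) z := by
  rw [dbar_ofReal (u := fun w => φ (u w)) (hφ.comp_hasFDerivAt z hu.hasFDerivAt),
    dbar_ofReal hu.hasFDerivAt]
  simp only [smul_apply, smul_eq_mul]
  push_cast
  ring

theorem dbar_ofReal_norm_sq : dbar (fun w => ((‖w‖ ^ 2 : ℝ) : ℂ)) z = z := by
  rw [dbar_ofReal (hasStrictFDerivAt_norm_sq z).hasFDerivAt]
  simp only [smul_apply, innerSL_apply_apply, Complex.inner]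
  apply Complex.ext <;> simp

end Complex

theorem Lg_eq_log_norm_sq (w : ℂ) : Lg w = 1 - Real.log (‖w‖ ^ 2) / 2 := by
  rw [Lg, Real.log_pow]
  ring

theorem Lg_pos {z : ℂ} (h0 : 0 < ‖z‖) (h1 : ‖z‖ < 1) : 0 < Lg z := by
  have hlog : Real.log ‖z‖ < 0 := Real.log_neg h0 h1
  rw [Lg]
  linarith

theorem hasDerivAt_one_sub_log_div_two {t : ℝ} (ht : t ≠ 0) :
    HasDerivAt (fun s => 1 - Real.log s / 2) (-(t⁻¹ / 2)) t :=
  ((Real.hasDerivAt_log ht).div_const 2).const_sub 1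

theorem differentiableAt_ofReal_Lg {z : ℂ} (hz : z ≠ 0) :
    DifferentiableAt ℝ (fun w => (Lg w : ℂ)) z :=
  ofRealCLM.differentiableAt.comp z
    (((differentiableAt_fun_id.norm ℝ hz).log (norm_ne_zero_iff.2 hz)).const_sub 1)

theorem dbar_ofReal_Lg {z : ℂ} (hz : z ≠ 0) :
    dbar (fun w => (Lg w : ℂ)) z = -z / (2 * ‖z‖ ^ 2) := by
  have hn : ‖z‖ ^ 2 ≠ 0 := by positivity
  simp only [Lg_eq_log_norm_sq]
  rw [dbar_ofReal_comp (hasDerivAt_one_sub_log_div_two hn) (differentiableAt_fun_id.norm_sq ℝ),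
    dbar_ofReal_norm_sq]
  push_cast
  field_simp

theorem differentiableAt_fEx {z : ℂ} (hz : z ≠ 0) (hL : Lg z ≠ 0) :
    DifferentiableAt ℝ fEx z :=
  ((differentiableAt_fun_id.mul (differentiableAt_ofReal_Lg hz)).inv
    (mul_ne_zero hz (ofReal_ne_zero.2 hL)))

theorem dbar_fEx {z : ℂ} (hz : z ≠ 0) (hL : Lg z ≠ 0) :
    dbar fEx z = ((2 * ‖z‖ ^ 2 * Lg z ^ 2 : ℝ) : ℂ)⁻¹ := by
  have hzL : z * (Lg z : ℂ) ≠ 0 := mul_ne_zero hz (ofReal_ne_zero.2 hL)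
  have hLg := differentiableAt_ofReal_Lg hz
  rw [show fEx = fun w => (w * (Lg w : ℂ))⁻¹ from rfl,
    dbar_inv (f := fun w => w * (Lg w : ℂ)) (differentiableAt_fun_id.mul hLg) hzL,
    dbar_mul differentiableAt_fun_id hLg, dbar_ofReal_Lg hz, dbar_id]
  push_cast
  field_simp
  ring

theorem rotation_mulVec_one_neg_I :
    (!![(0 : ℂ), -1; 1, 0]).mulVec ![1, -I] = I • ![1, -I] := by
  ext i
  fin_cases i <;> simp

theorem neg_Wcoef_mulVec_fEx_smul (z : ℂ) :
    -(Wcoef z).mulVec (fEx z • ![1, -I]) = ((2 * ‖z‖ ^ 2 * Lg z ^ 2 : ℝ) : ℂ)⁻¹ • ![1, -I] := by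
  have hN : ((starRingEnd ℂ) z)⁻¹ * z⁻¹ = ((‖z‖ : ℂ) ^ 2)⁻¹ := by
    rw [← mul_inv, conj_mul']
  have hcf : fEx z * (I / 2 / ((starRingEnd ℂ) z * (Lg z : ℂ)))
      = I / 2 * ((‖z‖ ^ 2 * Lg z ^ 2 : ℝ) : ℂ)⁻¹ := by
    simp only [fEx, div_eq_mul_inv, mul_inv]
    push_cast
    linear_combination (I / 2 * (Lg z : ℂ)⁻¹ ^ 2) * hN
  rw [Wcoef, Matrix.mulVec_smul, Matrix.smul_mulVec, rotation_mulVec_one_neg_I, smul_smul,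
    smul_smul, hcf, ← neg_smul]
  congr 1
  push_cast
  linear_combination (-(1 / 2) * ((‖z‖ : ℂ) ^ 2 * (Lg z : ℂ) ^ 2)⁻¹) * I_mul_I

theorem statement12 (z : ℂ) (h0 : 0 < ‖z‖) (h1 : ‖z‖ < 1) :
    DifferentiableAt ℝ fEx z ∧
    (1/2 : ℂ) * ((fderiv ℝ fEx z) 1 + Complex.I * (fderiv ℝ fEx z) Complex.I)
      = (((2 * ‖z‖ ^ 2 * Lg z ^ 2 : ℝ) : ℂ))⁻¹ ∧
    -- the (0,1)-derivative of the ℂ²-valued coefficient of α equals −W·(coefficient of α)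
    ((1/2 : ℂ) * ((fderiv ℝ fEx z) 1 + Complex.I * (fderiv ℝ fEx z) Complex.I))
        • ![(1 : ℂ), -Complex.I]
      = -((Wcoef z).mulVec (fun i => fEx z * ![(1 : ℂ), -Complex.I] i)) := by
  have hz : z ≠ 0 := norm_pos_iff.1 h0
  have hL : Lg z ≠ 0 := (Lg_pos h0 h1).ne'
  have hdbar := dbar_fEx hz hL
  rw [dbar] at hdbar
  exact ⟨differentiableAt_fEx hz hL, hdbar, hdbar ▸ (neg_Wcoef_mulVec_fEx_smul z).symm⟩
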